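/- Let p be an odd prime and let (G,∘) be a cyclic group of order pⁿ for some n ≥ 1. Then for every group operation · on G such that (G,·,∘) is a skew brace, every subgroup of (G,∘) is a left ideal of (G,·,∘). -/

import Mathlib

def IsSkewBrace {G : Type*} (dot circ : Group G) : Prop :=
  ∀ σ τ κ : G,
    circ.mul σ (dot.mul τ κ) =
      dot.mul (dot.mul (circ.mul σ τ) (dot.inv σ)) (circ.mul σ κ)

def gammaFun {G : Type*} (dot circ : Group G) (σ τ : G) : G :=
  dot.mul (dot.inv σ) (circ.mul σ τ)

def IsSubgroupOf {G : Type*} (S : Group G) (H : Set G) : Prop :=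
  S.one ∈ H ∧ (∀ a ∈ H, ∀ b ∈ H, S.mul a b ∈ H) ∧ (∀ a ∈ H, S.inv a ∈ H)

def IsLeftIdeal {G : Type*} (dot circ : Group G) (H : Set G) : Prop :=
  IsSubgroupOf dot H ∧ ∀ σ : G, ∀ τ ∈ H, gammaFun dot circ σ τ ∈ H

def IsStrongLeftIdeal {G : Type*} (dot circ : Group G) (H : Set G) : Prop :=
  IsLeftIdeal dot circ H ∧
    ∀ σ : G, ∀ τ ∈ H, dot.mul (dot.mul σ τ) (dot.inv σ) ∈ H

def IsCharacteristicSubgroupOf {G : Type*} (S : Group G) (H : Set G) : Prop :=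
  IsSubgroupOf S H ∧
    ∀ f : G ≃ G, (∀ a b : G, f (S.mul a b) = S.mul (f a) (f b)) → ∀ a ∈ H, f a ∈ H

def oppGroup {G : Type*} (dot : Group G) : Group G :=
  letI := dot
  { mul := fun a b => b * a
    one := (1 : G)
    inv := fun a => a⁻¹
    npow := fun n x => @npowRec G ⟨(1 : G)⟩ ⟨fun a b => b * a⟩ n x
    npow_zero := fun _ => rfl
    npow_succ := fun _ _ => rfl
    div := fun a b => b⁻¹ * a
    zpow := fun n x => @zpowRec G ⟨(1 : G)⟩ ⟨fun a b => b * a⟩ ⟨fun a => a⁻¹⟩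
      (fun n x => @npowRec G ⟨(1 : G)⟩ ⟨fun a b => b * a⟩ n x) n x
    zpow_zero' := fun _ => rfl
    zpow_succ' := fun _ _ => rfl
    zpow_neg' := fun _ _ => rfl
    div_eq_mul_inv := fun _ _ => rfl
    mul_assoc := fun a b c => (mul_assoc c b a).symm
    one_mul := fun a => mul_one a
    mul_one := fun a => one_mul a
    inv_mul_cancel := fun a => mul_inv_cancel a }

def lam {G : Type*} (S : Group G) (σ : G) : Equiv.Perm G :=
  letI := S; Equiv.mulLeft σ

def rho {G : Type*} (S : Group G) (σ : G) : Equiv.Perm G :=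
  letI := S; Equiv.mulRight σ⁻¹


/-
The gamma function is an action of `(G,∘)` on `(G,·)` by automorphisms, so `(G,·) ⋊_γ (G,∘)` is a
group of order `p^(2n)` containing `(G,∘)` as a subgroup of order `p^n`. By Sylow theory this
subgroup lies in a subgroup `T` of order `p^(n+k)` for every `k ≤ n`, and the `a` with
`(a, 1) ∈ T` form a γ-invariant subgroup of `(G,·)` of order `p^k`: a left ideal. Left ideals are
also subgroups of `(G,∘)`, and a cyclic group has only one subgroup of each order, so every
subgroup of `(G,∘)` is one of these left ideals.
-/

namespace SemidirectProduct
variable {N G : Type*} [Group N] [Group G] {φ : G →* MulAut N}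

theorem card_eq_card_comap_inl_mul (T : Subgroup (N ⋊[φ] G)) (hT : inr.range ≤ T) :
    Nat.card T = Nat.card (T.comap inl) * Nat.card G := by
  have mem_iff (x : N ⋊[φ] G) : x ∈ T ↔ inl x.left ∈ T := by
    conv_lhs => rw [← inl_left_mul_inr_right x]
    exact T.mul_mem_cancel_right (hT ⟨x.right, rfl⟩)
  rw [← Nat.card_prod]
  exact Nat.card_congr
    { toFun t := (⟨t.1.left, (mem_iff t.1).1 t.2⟩, t.1.right)
      invFun bg := ⟨⟨bg.1, bg.2⟩, (mem_iff _).2 bg.1.2⟩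
      left_inv _ := rfl
      right_inv _ := rfl }

theorem map_mem_comap_inl {T : Subgroup (N ⋊[φ] G)} (hT : inr.range ≤ T) (g : G) {n : N}
    (hn : n ∈ T.comap inl) : φ g n ∈ T.comap inl := by
  rw [Subgroup.mem_comap, inl_aut]
  exact T.mul_mem (T.mul_mem (hT ⟨g, rfl⟩) hn) (hT ⟨g⁻¹, rfl⟩)

end SemidirectProduct

open SemidirectProduct in
theorem exists_mulAut_invariant_subgroup_card_eq {N G : Type*} [Group N] [Group G] [Finite N]
    (φ : G →* MulAut N) {p m k : ℕ} [hp : Fact p.Prime] (hG : Nat.card G = p ^ m)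
    (hk : p ^ k ∣ Nat.card N) :
    ∃ B : Subgroup N, (∀ g, ∀ n ∈ B, φ g n ∈ B) ∧ Nat.card B = p ^ k := by
  have : Finite G := Nat.finite_of_card_ne_zero (hG ▸ pow_ne_zero m hp.out.ne_zero)
  have : Finite (N ⋊[φ] G) := Finite.of_equiv _ equivProd.symm
  have hdvd : p ^ (k + m) ∣ Nat.card (N ⋊[φ] G) := by
    rw [SemidirectProduct.card, hG, pow_add]
    exact mul_dvd_mul_right hk _
  obtain ⟨T, hTcard, hT⟩ := Sylow.exists_subgroup_card_pow_prime_le p hdvd inr.range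
    (by rw [← hG]; exact Nat.card_range_of_injective inr_injective) (Nat.le_add_left m k)
  refine ⟨T.comap inl, fun g n hn => map_mem_comap_inl hT g hn, ?_⟩
  have hcard := card_eq_card_comap_inl_mul T hT
  rw [hTcard, hG, pow_add] at hcard
  exact (Nat.eq_of_mul_eq_mul_right (pow_pos hp.out.pos m) hcard).symm

open Finset in
theorem IsCyclic.subgroup_eq_of_card_eq {α : Type*} [Group α] [Finite α] [IsCyclic α]
    {H K : Subgroup α} (h : Nat.card H = Nat.card K) : H = K := by
  classical
  have : Fintype α := Fintype.ofFinite α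
  have eq_setOf (L : Subgroup α) : (L : Set α) = {x | x ^ Nat.card L = 1} := by
    refine Set.eq_of_subset_of_ncard_le (fun x hx => ?_) ?_ (Set.toFinite _)
    · exact orderOf_dvd_iff_pow_eq_one.1 (L.orderOf_dvd_natCard hx)
    · calc {x : α | x ^ Nat.card L = 1}.ncard = #{x | x ^ Nat.card L = 1} := by
            rw [Set.ncard_eq_toFinset_card', Set.toFinset_ofPred]; rfl
        _ ≤ Nat.card L := IsCyclic.card_pow_eq_one_le Nat.card_pos
        _ = (L : Set α).ncard := Nat.card_coe_set_eq _
  exact SetLike.coe_injective (by rw [eq_setOf H, eq_setOf K, h])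

/-- A copy of `G` whose instance is `S`, so that `(G,·)` and `(G,∘)` can both be instances. -/
def WithGroup {G : Type*} (_ : Group G) : Type _ := G

instance {G : Type*} (S : Group G) : Group (WithGroup S) := S

instance {G : Type*} [Finite G] (S : Group G) : Finite (WithGroup S) := ‹Finite G›

namespace IsSubgroupOf
variable {G : Type*} {S : Group G} {H : Set G}

def toSubgroup (h : IsSubgroupOf S H) : Subgroup (WithGroup S) where
  carrier := H
  one_mem' := h.1
  mul_mem' {a b} ha hb := h.2.1 a ha b hb
  inv_mem' {a} ha := h.2.2 a ha

theorem coe_toSubgroup (h : IsSubgroupOf S H) : (h.toSubgroup : Set (WithGroup S)) = H := rfl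

theorem card_toSubgroup (h : IsSubgroupOf S H) : Nat.card h.toSubgroup = Nat.card H := rfl

end IsSubgroupOf

section SkewBrace
variable {G : Type*} {circ : Group G} [dot : Group G]

local infixl:70 " ⊚ " => circ.mul
local notation "γ" => gammaFun dot circ

theorem gammaFun_def (σ τ : G) : γ σ τ = σ⁻¹ * (σ ⊚ τ) := rfl

theorem mul_gammaFun (σ τ : G) : σ * γ σ τ = σ ⊚ τ := mul_inv_cancel_left σ _

namespace IsSkewBrace

theorem circ_mul_mul (h : IsSkewBrace dot circ) (σ τ κ : G) :
    σ ⊚ (τ * κ) = (σ ⊚ τ) * σ⁻¹ * (σ ⊚ κ) :=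
  h σ τ κ

theorem circ_mul_one (h : IsSkewBrace dot circ) (σ : G) : σ ⊚ 1 = σ := by
  have h11 := h.circ_mul_mul σ 1 1
  simp only [mul_one, mul_assoc, left_eq_mul, inv_mul_eq_one] at h11
  exact h11.symm

theorem one_eq (h : IsSkewBrace dot circ) : (1 : G) = circ.one :=
  (@one_mul G circ.toMulOneClass 1).symm.trans (h.circ_mul_one circ.one)

theorem gammaFun_mul (h : IsSkewBrace dot circ) (σ τ κ : G) :
    γ σ (τ * κ) = γ σ τ * γ σ κ := by
  simp only [gammaFun_def, h.circ_mul_mul, mul_assoc]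

theorem gammaFun_one_right (h : IsSkewBrace dot circ) (σ : G) : γ σ 1 = 1 := by
  rw [gammaFun_def, h.circ_mul_one, inv_mul_cancel]

theorem gammaFun_one_left (h : IsSkewBrace dot circ) (τ : G) : γ circ.one τ = τ := by
  rw [gammaFun_def, show circ.one ⊚ τ = τ from @one_mul G circ.toMulOneClass τ, ← h.one_eq,
    inv_one, one_mul]

theorem gammaFun_inv (h : IsSkewBrace dot circ) (σ τ : G) : γ σ τ⁻¹ = (γ σ τ)⁻¹ :=
  eq_inv_of_mul_eq_one_right (by rw [← h.gammaFun_mul, mul_inv_cancel, h.gammaFun_one_right])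

theorem gammaFun_circ_mul (h : IsSkewBrace dot circ) (σ τ κ : G) :
    γ (σ ⊚ τ) κ = γ σ (γ τ κ) := by
  rw [gammaFun_def τ, h.gammaFun_mul, h.gammaFun_inv, gammaFun_def, gammaFun_def, gammaFun_def,
    show σ ⊚ τ ⊚ κ = σ ⊚ (τ ⊚ κ) from @mul_assoc G circ.toSemigroup σ τ κ]
  group

theorem circ_inv_eq_gammaFun (h : IsSkewBrace dot circ) (σ : G) :
    circ.inv σ = γ (circ.inv σ) σ⁻¹ := by
  have hγ : γ σ (circ.inv σ) = σ⁻¹ := by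
    rw [← mul_right_inj σ, mul_gammaFun, mul_inv_cancel, h.one_eq]
    exact @mul_inv_cancel G circ σ
  rw [← hγ, ← h.gammaFun_circ_mul,
    show circ.inv σ ⊚ σ = circ.one from @inv_mul_cancel G circ σ, h.gammaFun_one_left]

abbrev gammaAction (h : IsSkewBrace dot circ) : MulDistribMulAction (WithGroup circ) G where
  smul σ τ := γ σ τ
  one_smul := h.gammaFun_one_left
  mul_smul σ τ κ := h.gammaFun_circ_mul σ τ κ
  smul_one σ := h.gammaFun_one_right σ
  smul_mul σ τ κ := h.gammaFun_mul σ τ κ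

theorem exists_isLeftIdeal_card_eq [Finite G] (h : IsSkewBrace dot circ) {p n k : ℕ}
    [Fact p.Prime] (hcard : Nat.card G = p ^ n) (hk : k ≤ n) :
    ∃ B : Set G, IsLeftIdeal dot circ B ∧ Nat.card B = p ^ k := by
  obtain ⟨B, hB, hBcard⟩ := exists_mulAut_invariant_subgroup_card_eq
    (@MulDistribMulAction.toMulAut _ _ _ _ h.gammaAction) hcard (hcard ▸ pow_dvd_pow p hk)
  exact ⟨B, ⟨⟨B.one_mem, fun _ ha _ hb => B.mul_mem ha hb, fun _ ha => B.inv_mem ha⟩, hB⟩,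
    hBcard⟩

end IsSkewBrace

theorem IsLeftIdeal.isSubgroupOf_circ {B : Set G} (hB : IsLeftIdeal dot circ B)
    (h : IsSkewBrace dot circ) : IsSubgroupOf circ B := by
  obtain ⟨⟨one_mem, mul_mem, inv_mem⟩, gammaFun_mem⟩ := hB
  refine ⟨h.one_eq ▸ one_mem, fun a ha b hb => ?_, fun a ha => ?_⟩
  · have : a * γ a b ∈ B := mul_mem a ha _ (gammaFun_mem a b hb)
    rwa [mul_gammaFun] at this
  · rw [h.circ_inv_eq_gammaFun]
    exact gammaFun_mem _ _ (inv_mem a ha)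

end SkewBrace

theorem stmt18_general {G : Type*} [Finite G] (circ : Group G) (p n : ℕ)
    (hp : p.Prime) (hcard : Nat.card G = p ^ n)
    (hcyc : ∃ g : G, ∀ x : G, ∃ k : ℤ, x = circ.zpow k g) :
    ∀ dot : Group G, IsSkewBrace dot circ →
      ∀ H : Set G, IsSubgroupOf circ H → IsLeftIdeal dot circ H := by
  intro dot hsb H hH
  have : Fact p.Prime := ⟨hp⟩
  have : IsCyclic (WithGroup circ) :=
    let ⟨g, hg⟩ := hcyc
    ⟨g, fun x => (hg x).imp fun _ hk => hk.symm⟩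
  obtain ⟨k, hk, hHcard⟩ := (Nat.dvd_prime_pow hp).1
    (hH.card_toSubgroup ▸ hcard ▸ Subgroup.card_subgroup_dvd_card hH.toSubgroup)
  obtain ⟨B, hB, hBcard⟩ := hsb.exists_isLeftIdeal_card_eq hcard hk
  have hHB : hH.toSubgroup = (hB.isSubgroupOf_circ hsb).toSubgroup :=
    IsCyclic.subgroup_eq_of_card_eq (by
      rw [IsSubgroupOf.card_toSubgroup, IsSubgroupOf.card_toSubgroup, hHcard, hBcard])
  rw [← hH.coe_toSubgroup, hHB]
  exact hB

/-- If `(G,∘)` is cyclic of odd prime power order `p^n`, `n ≥ 1`, then for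
every skew brace `(G,·,∘)`, every subgroup of `(G,∘)` is a left ideal of `(G,·,∘)`. -/
theorem stmt18 {G : Type*} [Finite G] (circ : Group G) (p n : ℕ)
    (hp : p.Prime) (hodd : Odd p) (hn : 1 ≤ n) (hcard : Nat.card G = p ^ n)
    (hcyc : ∃ g : G, ∀ x : G, ∃ k : ℤ, x = circ.zpow k g) :
    ∀ dot : Group G, IsSkewBrace dot circ →
      ∀ H : Set G, IsSubgroupOf circ H → IsLeftIdeal dot circ H :=
  stmt18_general circ p n hp hcard hcyc
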